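/- For every point p = (x,y,z) ∈ ℝ³, with r = √(x² + y²), the linear functional γ_p(v) = cos(r)·v_z + g(x,y)·(x·v_y − y·v_x) on ℝ³ (where g(x,y) = sin(r)/r for r ≠ 0 and g = 1 at the origin) is nonzero, and its kernel is a 2-dimensional subspace of ℝ³. Moreover, at every point (0,0,z) on the z-axis this kernel equals the horizontal plane {v ∈ ℝ³ : v_z = 0}. -/

import Mathlib

/-!
At `p = (x, y, z)` with `r = √(x² + y²)`, the form `γ_p` takes the value `cos r` on the vertical
vector `(0, 0, 1)` and the value `r sin r` on the rotation field `(-y, x, 0)`. These cannot both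
vanish, since `cos r = 0` forces `r ≠ 0` and `sin r = ±1`. So `γ_p` is a nonzero functional on
`ℝ³` and its kernel is a plane; on the `z`-axis `r = 0`, and `γ_p` is just `v ↦ v_z`.
-/

noncomputable section

def g (q : ℝ × ℝ) : ℝ :=
  if q = (0, 0) then 1
  else Real.sin (Real.sqrt (q.1 ^ 2 + q.2 ^ 2)) / Real.sqrt (q.1 ^ 2 + q.2 ^ 2)

def gammaL (p : ℝ × ℝ × ℝ) : (ℝ × ℝ × ℝ) →ₗ[ℝ] ℝ where
  toFun v := Real.cos (Real.sqrt (p.1 ^ 2 + p.2.1 ^ 2)) * v.2.2 +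
    g (p.1, p.2.1) * (p.1 * v.2.1 - p.2.1 * v.1)
  map_add' a b := by
    simp only [Prod.fst_add, Prod.snd_add]
    ring
  map_smul' c a := by
    simp only [Prod.smul_fst, Prod.smul_snd, smul_eq_mul, RingHom.id_apply]
    ring

open Real

theorem Real.cos_ne_zero_or_mul_sin_ne_zero (r : ℝ) : cos r ≠ 0 ∨ r * sin r ≠ 0 := by
  by_contra! ⟨hcos, hrsin⟩
  have hr : r ≠ 0 := by rintro rfl; simp at hcos
  have hsin : sin r = 0 := (mul_eq_zero.mp hrsin).resolve_left hr
  simpa [hcos, hsin] using sin_sq_add_cos_sq r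

theorem g_mul_sq (q : ℝ × ℝ) :
    g q * (q.1 ^ 2 + q.2 ^ 2) = √(q.1 ^ 2 + q.2 ^ 2) * sin √(q.1 ^ 2 + q.2 ^ 2) := by
  unfold g
  split_ifs with hq
  · simp [hq]
  · have hsq : √(q.1 ^ 2 + q.2 ^ 2) ^ 2 = q.1 ^ 2 + q.2 ^ 2 := sq_sqrt (by positivity)
    set s := √(q.1 ^ 2 + q.2 ^ 2)
    rw [← hsq]
    rcases eq_or_ne s 0 with hs | hs
    · simp [hs]
    · field_simp

theorem gammaL_apply (p v : ℝ × ℝ × ℝ) :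
    gammaL p v = cos √(p.1 ^ 2 + p.2.1 ^ 2) * v.2.2 +
      g (p.1, p.2.1) * (p.1 * v.2.1 - p.2.1 * v.1) :=
  rfl

theorem gammaL_apply_vertical (p : ℝ × ℝ × ℝ) :
    gammaL p (0, 0, 1) = cos √(p.1 ^ 2 + p.2.1 ^ 2) := by
  simp [gammaL_apply]

theorem gammaL_apply_rotation (p : ℝ × ℝ × ℝ) :
    gammaL p (-p.2.1, p.1, 0) = √(p.1 ^ 2 + p.2.1 ^ 2) * sin √(p.1 ^ 2 + p.2.1 ^ 2) := by
  rw [gammaL_apply, ← g_mul_sq (p.1, p.2.1)]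
  ring

theorem gammaL_ne_zero (p : ℝ × ℝ × ℝ) : gammaL p ≠ 0 := by
  intro h
  rcases cos_ne_zero_or_mul_sin_ne_zero √(p.1 ^ 2 + p.2.1 ^ 2) with hcos | hrsin
  · exact hcos (by rw [← gammaL_apply_vertical, h, LinearMap.zero_apply])
  · exact hrsin (by rw [← gammaL_apply_rotation, h, LinearMap.zero_apply])

theorem gammaL_zAxis_apply (z : ℝ) (v : ℝ × ℝ × ℝ) : gammaL (0, 0, z) v = v.2.2 := by
  simp [gammaL_apply]

/-- At every point `p` of `ℝ³` the overtwisted form `γ_p` is a nonzero linear functional,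
so its kernel is a 2-dimensional subspace of `ℝ³` (a genuine 2-plane field); moreover at
every point `(0,0,z)` of the `z`-axis this kernel is the horizontal plane `{v : v_z = 0}`. -/
theorem overtwisted_form_nowhere_zero_plane_field :
    (∀ p : ℝ × ℝ × ℝ, gammaL p ≠ 0 ∧
      Module.finrank ℝ (LinearMap.ker (gammaL p)) = 2) ∧
    (∀ z : ℝ, (LinearMap.ker (gammaL (0, 0, z)) : Set (ℝ × ℝ × ℝ)) =
      {v : ℝ × ℝ × ℝ | v.2.2 = 0}) := by
  refine ⟨fun p => ⟨gammaL_ne_zero p, ?_⟩, fun z => ?_⟩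
  · have h := Module.Dual.finrank_ker_add_one_of_ne_zero (gammaL_ne_zero p)
    simp only [Module.finrank_prod, Module.finrank_self] at h
    omega
  · ext v
    simp [gammaL_zAxis_apply]
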